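/- arXiv:2212.03804 — 2 statements merged into one kernel-verified Lean document; each statement's English description precedes it below -/
import Mathlib

section
/- With notation as in the coarse-grain filter, the detail pass filter output f̂^{(d)}_G(e) := f_G(e) − f_G(E_k^{(j)})/2^j (for e ∈ E_k^{(j)}) equals the orthogonal projection of f_G onto the span of the wavelet functions {θ_k^{(ℓ)} : ℓ ≤ j}, and f_G = f̂^{(c)}_G + f̂^{(d)}_G with ⟨f̂^{(c)}_G, f̂^{(d)}_G⟩ = 0. -/
/-!
The blocks `P j k`, `k < 2 ^ (n - j)`, of each level partition `E`: descending from the top block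
shows that they cover `E`, and they are pairwise disjoint because their sizes add up to `|E|`.
On the block `P (j + 1) k` the wavelet `θ_{j+1,k}` is `±2^{-(j+1)/2}` on its two halves, so the
level-`(j + 1)` wavelet component of `f` is the difference of the block averages at levels `j`
and `j + 1`. Summed over the levels `< j` this telescopes to `f - f̂⁽ᶜ⁾`, the level-`0` average
being `f` itself. Orthogonality holds because `f̂⁽ᶜ⁾` is constant on each block of level `j`, on
which `f̂⁽ᵈ⁾` sums to zero.
-/

open Finset

/-- Wavelet function: value `2^(-j/2)` on `P (j-1) (2k)`, `-2^(-j/2)` on `P (j-1) (2k+1)`,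
else `0`. -/
noncomputable def waveFun {E : Type*} [DecidableEq E] (P : ℕ → ℕ → Finset E) (j k : ℕ) :
    E → ℝ :=
  fun e =>
    if e ∈ P (j - 1) (2 * k) then (Real.sqrt (2 ^ j))⁻¹
    else if e ∈ P (j - 1) (2 * k + 1) then -(Real.sqrt (2 ^ j))⁻¹
    else 0

/-- Coarse-grain pass filter: on each top block `P j k` the function is replaced by its
block average. -/
noncomputable def coarseFilter {E : Type*} [DecidableEq E] (P : ℕ → ℕ → Finset E)
    (n j : ℕ) (f : E → ℝ) : E → ℝ :=
  fun e => ∑ k ∈ Finset.range (2 ^ (n - j)),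
    if e ∈ P j k then (∑ e' ∈ P j k, f e') / 2 ^ j else 0

/-- Detail pass filter: the residual of the coarse-grain pass filter. -/
noncomputable def detailFilter {E : Type*} [DecidableEq E] (P : ℕ → ℕ → Finset E)
    (n j : ℕ) (f : E → ℝ) : E → ℝ :=
  fun e => f e - coarseFilter P n j f e

theorem Finset.eq_of_mem_of_sum_card_le {ι α : Type*} [Fintype α] {s : Finset ι}
    {B : ι → Finset α} (hcover : ∀ a, ∃ i ∈ s, a ∈ B i)
    (hsum : ∑ i ∈ s, #(B i) ≤ Fintype.card α) {i i' : ι} (hi : i ∈ s) (hi' : i' ∈ s)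
    {a : α} (ha : a ∈ B i) (ha' : a ∈ B i') : i = i' := by
  classical
  by_contra hne
  set c : α → ℕ := fun a => #{i ∈ s | a ∈ B i}
  have hdouble : ∑ a, c a = ∑ i ∈ s, #(B i) := by
    simp only [c, card_eq_sum_ones, sum_filter]
    rw [sum_comm]
    simp
  have hpos : ∀ a, 1 ≤ c a := fun a => by
    obtain ⟨j, hj, haj⟩ := hcover a
    exact one_le_card.mpr ⟨j, mem_filter.mpr ⟨hj, haj⟩⟩
  have htwo : 1 < c a :=
    one_lt_card_iff.mpr ⟨i, i', mem_filter.mpr ⟨hi, ha⟩, mem_filter.mpr ⟨hi', ha'⟩, hne⟩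
  have hlt : ∑ _a : α, 1 < ∑ a, c a :=
    sum_lt_sum (fun a _ => hpos a) ⟨a, mem_univ a, htwo⟩
  simp only [sum_const, card_univ, smul_eq_mul, mul_one] at hlt
  omega

section Wavelet

variable {E : Type*} [DecidableEq E] {P : ℕ → ℕ → Finset E}

theorem waveFun_succ_eq {j k : ℕ} (hd : Disjoint (P j (2 * k)) (P j (2 * k + 1))) (e : E) :
    waveFun P (j + 1) k e = (Real.sqrt (2 ^ (j + 1)))⁻¹ *
      ((if e ∈ P j (2 * k) then 1 else 0) - (if e ∈ P j (2 * k + 1) then 1 else 0)) := by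
  by_cases hA : e ∈ P j (2 * k)
  · simp [waveFun, hA, disjoint_left.mp hd hA]
  · by_cases hB : e ∈ P j (2 * k + 1) <;> simp [waveFun, hA, hB]

theorem sum_mul_waveFun_succ [Fintype E] {j k : ℕ}
    (hd : Disjoint (P j (2 * k)) (P j (2 * k + 1))) (f : E → ℝ) :
    ∑ e, f e * waveFun P (j + 1) k e =
      (∑ e ∈ P j (2 * k), f e - ∑ e ∈ P j (2 * k + 1), f e) * (Real.sqrt (2 ^ (j + 1)))⁻¹ := by
  simp only [waveFun_succ_eq hd, mul_sub, mul_ite, mul_one, mul_zero, sum_sub_distrib,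
    sum_ite_mem, univ_inter, ← sum_mul, sub_mul]

end Wavelet

theorem Nat.two_mul_add_one_lt_two_pow_sub {n j k : ℕ} (hj : j < n)
    (hk : k < 2 ^ (n - (j + 1))) : 2 * k + 1 < 2 ^ (n - j) := by
  rw [show n - j = n - (j + 1) + 1 by omega, pow_succ]
  omega

structure IsDyadicPartition {E : Type*} [Fintype E] [DecidableEq E] (n : ℕ)
    (P : ℕ → ℕ → Finset E) : Prop where
  top : P n 0 = univ
  split : ∀ j k, j < n → k < 2 ^ (n - (j + 1)) → P (j + 1) k = P j (2 * k) ∪ P j (2 * k + 1)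
  card : ∀ j k, j ≤ n → k < 2 ^ (n - j) → #(P j k) = 2 ^ j

namespace IsDyadicPartition

variable {E : Type*} [Fintype E] [DecidableEq E] {n : ℕ} {P : ℕ → ℕ → Finset E}

theorem exists_mem (hP : IsDyadicPartition n P) {j : ℕ} (hj : j ≤ n) (e : E) :
    ∃ k < 2 ^ (n - j), e ∈ P j k := by
  induction hj using Nat.decreasingInduction with
  | self => exact ⟨0, by simp, hP.top ▸ mem_univ e⟩
  | of_succ j hj ih =>
    obtain ⟨k, hk, he⟩ := ih
    rw [hP.split j k hj hk, mem_union] at he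
    rcases he with he | he
    · exact ⟨2 * k, by have := Nat.two_mul_add_one_lt_two_pow_sub hj hk; omega, he⟩
    · exact ⟨2 * k + 1, Nat.two_mul_add_one_lt_two_pow_sub hj hk, he⟩

theorem eq_of_mem (hP : IsDyadicPartition n P) {j k k' : ℕ} (hj : j ≤ n)
    (hk : k < 2 ^ (n - j)) (hk' : k' < 2 ^ (n - j)) {e : E} (he : e ∈ P j k)
    (he' : e ∈ P j k') : k = k' := by
  refine eq_of_mem_of_sum_card_le (s := range (2 ^ (n - j))) (fun e => ?_) ?_
    (mem_range.mpr hk) (mem_range.mpr hk') he he'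
  · obtain ⟨k, hk, he⟩ := hP.exists_mem hj e
    exact ⟨k, mem_range.mpr hk, he⟩
  · rw [sum_congr rfl fun k hk => hP.card j k hj (mem_range.mp hk), sum_const, card_range,
      smul_eq_mul, ← pow_add, Nat.sub_add_cancel hj, ← card_univ, ← hP.top, hP.card n 0 le_rfl
      (by simp)]

theorem disjoint_children (hP : IsDyadicPartition n P) {j k : ℕ} (hj : j < n)
    (hk : k < 2 ^ (n - (j + 1))) : Disjoint (P j (2 * k)) (P j (2 * k + 1)) := by
  have hlt := Nat.two_mul_add_one_lt_two_pow_sub hj hk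
  refine disjoint_left.mpr fun e he he' => ?_
  have := hP.eq_of_mem hj.le (by omega) hlt he he'
  omega

theorem coarseFilter_eq_of_mem (hP : IsDyadicPartition n P) {j k : ℕ} (hj : j ≤ n)
    (hk : k < 2 ^ (n - j)) (f : E → ℝ) {e : E} (he : e ∈ P j k) :
    coarseFilter P n j f e = (∑ e' ∈ P j k, f e') / 2 ^ j := by
  refine (sum_eq_single_of_mem k (mem_range.mpr hk) fun k' hk' hne => ?_).trans (if_pos he)
  exact if_neg fun he' => hne (hP.eq_of_mem hj (mem_range.mp hk') hk he' he)

theorem coarseFilter_zero (hP : IsDyadicPartition n P) (f : E → ℝ) :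
    coarseFilter P n 0 f = f := by
  funext e
  obtain ⟨k, hk, he⟩ := hP.exists_mem (Nat.zero_le n) e
  obtain ⟨a, ha⟩ := card_eq_one.mp (hP.card 0 k (Nat.zero_le n) hk)
  rw [hP.coarseFilter_eq_of_mem (Nat.zero_le n) hk f he, ha]
  rw [ha, mem_singleton] at he
  simp [he]

theorem sum_detailFilter_eq_zero (hP : IsDyadicPartition n P) {j k : ℕ} (hj : j ≤ n)
    (hk : k < 2 ^ (n - j)) (f : E → ℝ) : ∑ e ∈ P j k, detailFilter P n j f e = 0 := by
  simp only [detailFilter, sum_sub_distrib]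
  rw [sum_congr rfl fun e he => hP.coarseFilter_eq_of_mem hj hk f he, sum_const,
    hP.card j k hj hk, nsmul_eq_mul, Nat.cast_pow, Nat.cast_ofNat,
    mul_div_cancel₀ _ (by positivity), sub_self]

theorem sum_coarseFilter_mul_detailFilter (hP : IsDyadicPartition n P) {j : ℕ} (hj : j ≤ n)
    (f : E → ℝ) : ∑ e, coarseFilter P n j f e * detailFilter P n j f e = 0 := by
  calc ∑ e, coarseFilter P n j f e * detailFilter P n j f e
      = ∑ k ∈ range (2 ^ (n - j)),
          (∑ e' ∈ P j k, f e') / 2 ^ j * ∑ e ∈ P j k, detailFilter P n j f e := by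
        simp only [coarseFilter, sum_mul, ite_mul, zero_mul, mul_sum]
        rw [sum_comm]
        simp only [sum_ite_mem, univ_inter]
    _ = 0 := sum_eq_zero fun k hk => by
        rw [hP.sum_detailFilter_eq_zero hj (mem_range.mp hk), mul_zero]

theorem sum_waveFun_succ_eq_sub (hP : IsDyadicPartition n P) {j : ℕ} (hj : j < n)
    (f : E → ℝ) (e : E) :
    ∑ k ∈ range (2 ^ (n - (j + 1))),
        (∑ e', f e' * waveFun P (j + 1) k e') * waveFun P (j + 1) k e =
      coarseFilter P n j f e - coarseFilter P n (j + 1) f e := by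
  obtain ⟨k₀, hk₀, he⟩ := hP.exists_mem hj e
  have hd := hP.disjoint_children hj hk₀
  have hlt := Nat.two_mul_add_one_lt_two_pow_sub hj hk₀
  rw [sum_eq_single_of_mem k₀ (mem_range.mpr hk₀) fun k hk hne => ?vanish]
  case vanish =>
    have he' : e ∉ P (j + 1) k := fun he' => hne (hP.eq_of_mem hj (mem_range.mp hk) hk₀ he' he)
    rw [hP.split j k hj (mem_range.mp hk), mem_union, not_or] at he'
    simp [waveFun, he'.1, he'.2]
  rw [sum_mul_waveFun_succ hd, hP.coarseFilter_eq_of_mem hj hk₀ f he, hP.split j k₀ hj hk₀,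
    sum_union hd, waveFun_succ_eq hd]
  have hsq : Real.sqrt (2 ^ (j + 1)) ^ 2 = 2 ^ (j + 1) := Real.sq_sqrt (by positivity)
  rw [hP.split j k₀ hj hk₀, mem_union] at he
  rcases he with hA | hB
  · rw [if_pos hA, if_neg (disjoint_left.mp hd hA),
      hP.coarseFilter_eq_of_mem hj.le (by omega) f hA]
    field_simp
    rw [hsq]
    ring
  · rw [if_pos hB, if_neg (disjoint_right.mp hd hB),
      hP.coarseFilter_eq_of_mem hj.le hlt f hB]
    field_simp
    rw [hsq]
    ring

theorem detailFilter_eq_sum_waveFun (hP : IsDyadicPartition n P) {j : ℕ} (hj : j ≤ n)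
    (f : E → ℝ) (e : E) :
    detailFilter P n j f e = ∑ ℓ : Fin j, ∑ k : Fin (2 ^ (n - (ℓ.1 + 1))),
      (∑ e', f e' * waveFun P (ℓ.1 + 1) k.1 e') * waveFun P (ℓ.1 + 1) k.1 e := by
  calc detailFilter P n j f e
      = ∑ ℓ ∈ range j, (coarseFilter P n ℓ f e - coarseFilter P n (ℓ + 1) f e) := by
        rw [sum_range_sub', hP.coarseFilter_zero]
        rfl
    _ = ∑ ℓ ∈ range j, ∑ k ∈ range (2 ^ (n - (ℓ + 1))),
          (∑ e', f e' * waveFun P (ℓ + 1) k e') * waveFun P (ℓ + 1) k e :=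
        sum_congr rfl fun ℓ hℓ =>
          (hP.sum_waveFun_succ_eq_sub (by rw [mem_range] at hℓ; omega) f e).symm
    _ = _ := by
        rw [← Fin.sum_univ_eq_sum_range]
        exact sum_congr rfl fun ℓ _ => (Fin.sum_univ_eq_sum_range
          (fun k => (∑ e', f e' * waveFun P (ℓ + 1) k e') * waveFun P (ℓ + 1) k e) _).symm

end IsDyadicPartition

theorem detail_filter_is_projection_onto_wavelets_general
    {E : Type*} [Fintype E] [DecidableEq E] (n : ℕ)
    (P : ℕ → ℕ → Finset E)
    (htop : P n 0 = Finset.univ)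
    (hunion : ∀ j k, 1 ≤ j → j ≤ n → k < 2 ^ (n - j) →
      P j k = P (j - 1) (2 * k) ∪ P (j - 1) (2 * k + 1))
    (hcard : ∀ j k, j ≤ n → k < 2 ^ (n - j) → (P j k).card = 2 ^ j)
    (j : ℕ) (hj : j ≤ n) (f : E → ℝ) :
    (∀ e : E, detailFilter P n j f e =
      ∑ ℓ : Fin j, ∑ k : Fin (2 ^ (n - (ℓ.1 + 1))),
        (∑ e' : E, f e' * waveFun P (ℓ.1 + 1) k.1 e') * waveFun P (ℓ.1 + 1) k.1 e) ∧
    (∀ e : E, f e = coarseFilter P n j f e + detailFilter P n j f e) ∧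
    (∑ e : E, coarseFilter P n j f e * detailFilter P n j f e) = 0 := by
  have hP : IsDyadicPartition n P :=
    { top := htop
      split := fun i k hi hk => by simpa using hunion (i + 1) k (by omega) hi hk
      card := hcard }
  exact ⟨hP.detailFilter_eq_sum_waveFun hj f, fun e => (add_sub_cancel _ _).symm,
    hP.sum_coarseFilter_mul_detailFilter hj f⟩

theorem detail_filter_is_projection_onto_wavelets
    {E : Type*} [Fintype E] [DecidableEq E] (n : ℕ) (hE : Fintype.card E = 2 ^ n)
    (P : ℕ → ℕ → Finset E)
    (htop : P n 0 = Finset.univ)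
    (hunion : ∀ j k, 1 ≤ j → j ≤ n → k < 2 ^ (n - j) →
      P j k = P (j - 1) (2 * k) ∪ P (j - 1) (2 * k + 1))
    (hdisj : ∀ j k, 1 ≤ j → j ≤ n → k < 2 ^ (n - j) →
      Disjoint (P (j - 1) (2 * k)) (P (j - 1) (2 * k + 1)))
    (hcard : ∀ j k, j ≤ n → k < 2 ^ (n - j) → (P j k).card = 2 ^ j)
    (j : ℕ) (hj : j ≤ n) (f : E → ℝ) :
    (∀ e : E, detailFilter P n j f e =
      ∑ ℓ : Fin j, ∑ k : Fin (2 ^ (n - (ℓ.1 + 1))),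
        (∑ e' : E, f e' * waveFun P (ℓ.1 + 1) k.1 e') * waveFun P (ℓ.1 + 1) k.1 e) ∧
    (∀ e : E, f e = coarseFilter P n j f e + detailFilter P n j f e) ∧
    (∑ e : E, coarseFilter P n j f e * detailFilter P n j f e) = 0 :=
  detail_filter_is_projection_onto_wavelets_general n P htop hunion hcard j hj f
end

section
/- Let L ∈ {0,1}^{T×M} be an unweighted link stream whose rows are graphs G_t, and let Q^{(diff)} = I − (1/2^j) Σ_k 𝟙_{E_k^{(j)}} 𝟙_{E_k^{(j)}}^⊤ for a partition of the relation set into blocks E_k^{(j)} of size 2^j. Then ‖L Q^{(diff)}‖_F² = Σ_t Σ_k ( m_{t,k} − m_{t,k}²/2^j ), where m_{t,k} is the number of active edges of G_t in block k; equivalently it equals Σ_t E[dist(G_t, G_t*)] where G_t* is uniformly random among graphs structurally equal to G_t. -/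
/-!
Right multiplication by `Q` replaces each entry of a row by its deviation from the mean of its
block, so the squared norm of a row splits over the blocks into `Σ x² - (Σ x)² / 2^j`, which is
`m - m² / 2^j` for a 0/1 row. For the expectation, a transposition inside a block permutes the sets
with prescribed block counts, so all elements of block `k` lie in equally many of them; double
counting makes this number `m_k / 2^j` of the total, whence `E |G ∩ G*| = Σ_k m_k² / 2^j`.
-/

open Finset Matrix

lemma sum_sq_sub_sum_div_card {α : Type*} (s : Finset α) (x : α → ℝ) :
    ∑ i ∈ s, (x i - (∑ i' ∈ s, x i') / #s) ^ 2 = ∑ i ∈ s, x i ^ 2 - (∑ i ∈ s, x i) ^ 2 / #s := by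
  rcases s.eq_empty_or_nonempty with rfl | hs
  · simp
  have hcard : (#s : ℝ) ≠ 0 := by exact_mod_cast hs.card_pos.ne'
  simp_rw [sub_sq, sum_add_distrib, sum_sub_distrib, ← sum_mul, ← mul_sum, sum_const, nsmul_eq_mul]
  field_simp
  ring

lemma sum_eq_card_filter_eq_one {α : Type*} {s : Finset α} {x : α → ℝ}
    (hx : ∀ i ∈ s, x i = 0 ∨ x i = 1) : ∑ i ∈ s, x i = #{i ∈ s | x i = 1} := by
  rw [← sum_boole]
  refine sum_congr rfl fun i hi => ?_
  rcases hx i hi with h | h <;> simp [h]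

lemma card_filter_apply_mem_eq {α : Type*} [DecidableEq α] {Ω : Finset (Finset α)}
    {σ : Equiv.Perm α}
    (hσ : ∀ S ∈ Ω, S.map σ.toEmbedding ∈ Ω) (hσ' : ∀ S ∈ Ω, S.map σ.symm.toEmbedding ∈ Ω)
    (a : α) : #{S ∈ Ω | σ a ∈ S} = #{S ∈ Ω | a ∈ S} := by
  refine card_nbij' (·.map σ.symm.toEmbedding) (·.map σ.toEmbedding) ?_ ?_ ?_ ?_
  · intro S hS
    simp only [mem_coe, mem_filter] at hS ⊢
    exact ⟨hσ' S hS.1, by simpa using hS.2⟩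
  · intro S hS
    simp only [mem_coe, mem_filter] at hS ⊢
    exact ⟨hσ S hS.1, by simpa using hS.2⟩
  all_goals intro S _; simp [Finset.map_map]

section Blocks

variable {α κ : Type*} {P : κ → Finset α}

lemma mem_block_iff_eq (hpart : ∀ i, ∃! k, i ∈ P k) {i : α} {k k' : κ} (hi : i ∈ P k) :
    i ∈ P k' ↔ k' = k :=
  ⟨fun hi' => (hpart i).unique hi' hi, fun h => h ▸ hi⟩

variable [DecidableEq α]

lemma swap_mem_block_iff (hpart : ∀ i, ∃! k, i ∈ P k) {a b : α} {k : κ} (ha : a ∈ P k)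
    (hb : b ∈ P k) (k' : κ) (x : α) : Equiv.swap a b x ∈ P k' ↔ x ∈ P k' := by
  have hab : a ∈ P k' ↔ b ∈ P k' := by
    rw [mem_block_iff_eq hpart ha, mem_block_iff_eq hpart hb]
  rcases eq_or_ne x a with rfl | hxa
  · rw [Equiv.swap_apply_left, hab]
  rcases eq_or_ne x b with rfl | hxb
  · rw [Equiv.swap_apply_right, hab]
  · rw [Equiv.swap_apply_of_ne_of_ne hxa hxb]

variable [Fintype κ]

lemma sum_ite_mem_block {β : Type*} [AddCommMonoid β] (hpart : ∀ i, ∃! k, i ∈ P k)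
    (i : α) (c : β) : ∑ k, (if i ∈ P k then c else 0) = c := by
  obtain ⟨k, hk, -⟩ := hpart i
  rw [sum_eq_single k (fun k' _ hk' => if_neg ((mem_block_iff_eq hpart hk).not.2 hk'))
    (fun h => absurd (mem_univ k) h), if_pos hk]

lemma sum_eq_sum_blocks {β : Type*} [AddCommMonoid β]
    (hpart : ∀ i, ∃! k, i ∈ P k) (s : Finset α) (f : α → β) :
    ∑ i ∈ s, f i = ∑ k, ∑ i ∈ s ∩ P k, f i := by
  simp_rw [← filter_mem_eq_inter, sum_filter]
  rw [sum_comm]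
  exact sum_congr rfl fun i _ => (sum_ite_mem_block hpart i (f i)).symm

end Blocks

section BlockDiff

variable {α κ : Type*} [DecidableEq α] [Fintype κ] {P : κ → Finset α}

/-- The paper's `Q^{(diff)} = I - (1/c) Σ_k 𝟙_{P k} 𝟙_{P k}ᵀ`, with `c` the block size `2^j`. -/
noncomputable def blockDiffMatrix (P : κ → Finset α) (c : ℝ) : Matrix α α ℝ :=
  of fun i i' => (if i = i' then 1 else 0) -
    (1 / c) * ∑ k, (if i ∈ P k then 1 else 0) * (if i' ∈ P k then 1 else 0)

lemma blockDiffMatrix_apply_of_mem (hpart : ∀ i, ∃! k, i ∈ P k) (c : ℝ) (i' : α) {i : α} {k : κ}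
    (hi : i ∈ P k) :
    blockDiffMatrix P c i' i = (if i' = i then 1 else 0) - (1 / c) * if i' ∈ P k then 1 else 0 := by
  have hsum : ∑ k', (if i' ∈ P k' then 1 else 0) * (if i ∈ P k' then (1 : ℝ) else 0) =
      if i' ∈ P k then 1 else 0 := by
    rw [sum_eq_single k (fun k' _ hk' => by simp [(mem_block_iff_eq hpart hi).not.2 hk'])
      (fun h => absurd (mem_univ k) h), if_pos hi, mul_one]
  rw [blockDiffMatrix, of_apply, hsum]

variable [Fintype α]

lemma vecMul_blockDiffMatrix_apply (hpart : ∀ i, ∃! k, i ∈ P k) (c : ℝ) (x : α → ℝ) {i : α}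
    {k : κ} (hi : i ∈ P k) : (x ᵥ* blockDiffMatrix P c) i = x i - (∑ i' ∈ P k, x i') / c := by
  simp only [vecMul, dotProduct, blockDiffMatrix_apply_of_mem hpart c _ hi, mul_sub,
    sum_sub_distrib, mul_ite, mul_one, mul_zero, sum_ite_eq', mem_univ, if_true, sum_ite_mem,
    univ_inter, mul_one_div, sum_div]

lemma sum_sq_vecMul_blockDiffMatrix (hpart : ∀ i, ∃! k, i ∈ P k) {c : ℝ}
    (hcard : ∀ k, (#(P k) : ℝ) = c) (x : α → ℝ) :
    ∑ i, (x ᵥ* blockDiffMatrix P c) i ^ 2 =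
      ∑ k, (∑ i ∈ P k, x i ^ 2 - (∑ i ∈ P k, x i) ^ 2 / c) := by
  rw [sum_eq_sum_blocks hpart]
  refine sum_congr rfl fun k _ => ?_
  rw [univ_inter, ← hcard k, ← sum_sq_sub_sum_div_card]
  exact sum_congr rfl fun i hi => by rw [vecMul_blockDiffMatrix_apply hpart _ x hi]

lemma sum_sq_vecMul_blockDiffMatrix_of_boolean (hpart : ∀ i, ∃! k, i ∈ P k) {c : ℝ}
    (hcard : ∀ k, (#(P k) : ℝ) = c) {x : α → ℝ} (hx : ∀ i, x i = 0 ∨ x i = 1) :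
    ∑ i, (x ᵥ* blockDiffMatrix P c) i ^ 2 =
      ∑ k, ((#(({i | x i = 1} : Finset α) ∩ P k) : ℝ) -
        (#(({i | x i = 1} : Finset α) ∩ P k) : ℝ) ^ 2 / c) := by
  have hsq : ∀ i, x i ^ 2 = x i := fun i => by rcases hx i with h | h <;> simp [h]
  have hblock : ∀ k, ∑ i ∈ P k, x i = #(({i | x i = 1} : Finset α) ∩ P k) := fun k => by
    rw [sum_eq_card_filter_eq_one fun i _ => hx i, filter_inter, univ_inter]
  simp_rw [sum_sq_vecMul_blockDiffMatrix hpart hcard, hsq, hblock]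

end BlockDiff

section BlockCounts

variable {α κ : Type*} [Fintype α] [DecidableEq α] [Fintype κ] {P : κ → Finset α}

/-- The edge sets of the graphs structurally equal to one with block counts `m`; the random graph
`G*` is uniform on them. -/
def withBlockCounts (P : κ → Finset α) (m : κ → ℕ) : Finset (Finset α) :=
  {S | ∀ k, #(S ∩ P k) = m k}

lemma map_mem_withBlockCounts {m : κ → ℕ} {σ : Equiv.Perm α} (hσ : ∀ k x, σ x ∈ P k ↔ x ∈ P k)
    {S : Finset α} (hS : S ∈ withBlockCounts P m) : S.map σ.toEmbedding ∈ withBlockCounts P m := by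
  have hblock : ∀ k, (P k).map σ.toEmbedding = P k := fun k => by
    ext x
    rw [mem_map_equiv, ← hσ, Equiv.apply_symm_apply]
  simp only [withBlockCounts, mem_filter, mem_univ, true_and] at hS ⊢
  intro k
  rw [← hblock k, ← map_inter, card_map, hS]

lemma card_block_mul_card_filter_mem (hpart : ∀ i, ∃! k, i ∈ P k) (m : κ → ℕ) {i : α} {k : κ}
    (hi : i ∈ P k) :
    #(P k) * #{S ∈ withBlockCounts P m | i ∈ S} = m k * #(withBlockCounts P m) := by
  set Ω := withBlockCounts P m
  have hconst : ∀ i' ∈ P k, #{S ∈ Ω | i' ∈ S} = #{S ∈ Ω | i ∈ S} := fun i' hi' => by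
    have hσ := swap_mem_block_iff hpart hi hi'
    have := card_filter_apply_mem_eq (Ω := Ω) (fun S => map_mem_withBlockCounts hσ)
      (fun S => map_mem_withBlockCounts fun k x => by
        rw [Equiv.symm_swap, hσ]) i
    rwa [Equiv.swap_apply_left] at this
  calc #(P k) * #{S ∈ Ω | i ∈ S} = ∑ i' ∈ P k, #{S ∈ Ω | i' ∈ S} := by
        rw [sum_congr rfl hconst, sum_const, smul_eq_mul]
    _ = ∑ S ∈ Ω, #(P k ∩ S) := by
        simpa only [bipartiteAbove, bipartiteBelow, filter_mem_eq_inter] using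
          sum_card_bipartiteAbove_eq_sum_card_bipartiteBelow (r := fun i (S : Finset α) => i ∈ S)
    _ = ∑ S ∈ Ω, m k := sum_congr rfl fun S hS => by
        rw [inter_comm]
        exact (mem_filter.1 hS).2 k
    _ = m k * #Ω := by rw [sum_const, smul_eq_mul, mul_comm]

lemma sum_card_inter_withBlockCounts (hpart : ∀ i, ∃! k, i ∈ P k) (m : κ → ℕ) (E : Finset α) :
    ∑ S ∈ withBlockCounts P m, (#(E ∩ S) : ℝ) =
      #(withBlockCounts P m) * ∑ k, #(E ∩ P k) * (m k : ℝ) / #(P k) := by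
  set Ω := withBlockCounts P m
  have hcount : ∀ k, ∀ e ∈ E ∩ P k, (#{S ∈ Ω | e ∈ S} : ℝ) = m k * #Ω / #(P k) := by
    intro k e he
    have hPk : (#(P k) : ℝ) ≠ 0 := by exact_mod_cast (card_pos.2 ⟨e, (mem_inter.1 he).2⟩).ne'
    rw [eq_div_iff hPk, mul_comm]
    exact_mod_cast card_block_mul_card_filter_mem hpart m (mem_inter.1 he).2
  calc ∑ S ∈ Ω, (#(E ∩ S) : ℝ) = ∑ e ∈ E, (#{S ∈ Ω | e ∈ S} : ℝ) := by
        have := sum_card_bipartiteAbove_eq_sum_card_bipartiteBelow (s := E) (t := Ω)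
          (r := fun e (S : Finset α) => e ∈ S)
        simp only [bipartiteAbove, bipartiteBelow, filter_mem_eq_inter] at this
        exact_mod_cast this.symm
    _ = ∑ k, ∑ e ∈ E ∩ P k, (m k * #Ω / #(P k) : ℝ) := by
        rw [sum_eq_sum_blocks hpart]
        exact sum_congr rfl fun k _ => sum_congr rfl (hcount k)
    _ = #Ω * ∑ k, #(E ∩ P k) * (m k : ℝ) / #(P k) := by
        simp only [sum_const, nsmul_eq_mul, mul_sum]
        exact sum_congr rfl fun k _ => by ring

theorem sum_card_sub_card_inter_div_card_withBlockCounts (hpart : ∀ i, ∃! k, i ∈ P k)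
    (E : Finset α) :
    (∑ S ∈ withBlockCounts P (fun k => #(E ∩ P k)), ((#E : ℝ) - #(E ∩ S))) /
        #(withBlockCounts P (fun k => #(E ∩ P k))) =
      ∑ k, ((#(E ∩ P k) : ℝ) - (#(E ∩ P k) : ℝ) ^ 2 / #(P k)) := by
  set Ω := withBlockCounts P (fun k => #(E ∩ P k))
  have hE : E ∈ Ω := by simp [Ω, withBlockCounts]
  have hΩ : (#Ω : ℝ) ≠ 0 := by exact_mod_cast (card_pos.2 ⟨E, hE⟩).ne'
  have hcardE : (#E : ℝ) = ∑ k, (#(E ∩ P k) : ℝ) := by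
    rw [card_eq_sum_ones, sum_eq_sum_blocks hpart]
    simp
  rw [sum_sub_distrib, sum_card_inter_withBlockCounts hpart, sum_const, nsmul_eq_mul, hcardE,
    div_eq_iff hΩ, sum_mul, mul_sum, mul_sum, ← sum_sub_distrib]
  exact sum_congr rfl fun k _ => by ring

end BlockCounts

theorem relational_regularity_of_link_stream
    {T M : ℕ} {κ : Type*} [Fintype κ]
    (j : ℕ) (P : κ → Finset (Fin M))
    (hpart : ∀ i : Fin M, ∃! k : κ, i ∈ P k)
    (hcard : ∀ k, (P k).card = 2 ^ j)
    (L : Matrix (Fin T) (Fin M) ℝ)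
    (hL : ∀ t i, L t i = 0 ∨ L t i = 1)
    (Et : Fin T → Finset (Fin M))
    (hEt : ∀ t, Et t = Finset.univ.filter (fun i => L t i = 1))
    (m : Fin T → κ → ℕ) (hm : ∀ t k, m t k = (Et t ∩ P k).card)
    (Q : Matrix (Fin M) (Fin M) ℝ)
    (hQ : Q = Matrix.of fun i i' =>
      (if i = i' then (1 : ℝ) else 0) -
        (1 / 2 ^ j) * ∑ k : κ,
          (if i ∈ P k then (1 : ℝ) else 0) * (if i' ∈ P k then (1 : ℝ) else 0))
    (Ω : Fin T → Finset (Finset (Fin M)))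
    (hΩ : ∀ t, Ω t = (Finset.univ : Finset (Fin M)).powerset.filter
      (fun S => ∀ k : κ, (S ∩ P k).card = m t k)) :
    (∑ t : Fin T, ∑ i : Fin M, ((L * Q) t i) ^ 2) =
      (∑ t : Fin T, ∑ k : κ, ((m t k : ℝ) - (m t k : ℝ) ^ 2 / 2 ^ j)) ∧
    (∑ t : Fin T, ∑ i : Fin M, ((L * Q) t i) ^ 2) =
      ∑ t : Fin T,
        (∑ S ∈ Ω t, (((Et t).card : ℝ) - ((Et t ∩ S).card : ℝ))) / ((Ω t).card : ℝ) := by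
  have hcardℝ : ∀ k, ((P k).card : ℝ) = 2 ^ j := fun k => by exact_mod_cast hcard k
  have hrow : ∀ t, ∑ i, ((L * Q) t i) ^ 2 = ∑ k, ((m t k : ℝ) - (m t k : ℝ) ^ 2 / 2 ^ j) := by
    intro t
    simp only [mul_apply_eq_vecMul, hQ, hm, hEt]
    exact sum_sq_vecMul_blockDiffMatrix_of_boolean hpart hcardℝ (hL t)
  have havg : ∀ t, (∑ S ∈ Ω t, (((Et t).card : ℝ) - ((Et t ∩ S).card : ℝ))) / ((Ω t).card : ℝ) =
      ∑ k, ((m t k : ℝ) - (m t k : ℝ) ^ 2 / 2 ^ j) := by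
    intro t
    have hΩt : Ω t = withBlockCounts P (fun k => #(Et t ∩ P k)) := by
      rw [hΩ t, powerset_univ, withBlockCounts]
      simp only [hm]
    simp only [hΩt, sum_card_sub_card_inter_div_card_withBlockCounts hpart, hcardℝ, hm]
  exact ⟨sum_congr rfl fun t _ => hrow t, sum_congr rfl fun t _ => (hrow t).trans (havg t).symm⟩
end
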